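/- Let (γ,ν) : I → Δ₁ be a spacelike Legendre curve with curvature (m,n) and μ = γ∧ν. Define x_T^±(s,t) = γ(t) + sμ(t) + (s²/2)(γ(t) ± ν(t)) and ν_T^±(s,t) = ∓ν(t) + sμ(t) + (s²/2)(γ(t) ± ν(t)) on ℝ × I. Then for all (s,t): ⟨x_T^±, x_T^±⟩ = −1 with first coordinate positive, ⟨ν_T^±, ν_T^±⟩ = 1, ⟨x_T^±, ν_T^±⟩ = 0 and ⟨∂x_T^±/∂s, ν_T^±⟩ = 0 (so (x_T^±, ν_T^±) is a one-parameter family of spacelike Legendre curves), and with μ_T^± = x_T^± ∧ ν_T^± the following identities hold: ∂x_T^±/∂s = ∓μ_T^±, ∂ν_T^±/∂s = ∓μ_T^±, ∂x_T^±/∂t = s(m(t) ± n(t))·ν_T^± + (∓m(t) ± s²(m(t) ± n(t))/2)·μ_T^±, and ∂ν_T^±/∂t = s(m(t) ± n(t))·x_T^± + (n(t) ± s²(m(t) ± n(t))/2)·μ_T^±. In particular the curvature of this family is (∓1, ∓1, s(m±n), ∓m ± s²(m±n)/2, n ± s²(m±n)/2). -/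

import Mathlib

noncomputable section

/-- Pseudo scalar product of Lorentz–Minkowski 3-space. -/
def mink (x y : Fin 3 → ℝ) : ℝ := -(x 0 * y 0) + x 1 * y 1 + x 2 * y 2

/-- Pseudo vector product of Lorentz–Minkowski 3-space. -/
def lcross (x y : Fin 3 → ℝ) : Fin 3 → ℝ :=
  ![-(x 1 * y 2 - x 2 * y 1), -(x 0 * y 2 - x 2 * y 0), x 0 * y 1 - x 1 * y 0]

lemma mink_add_left (x y z : Fin 3 → ℝ) : mink (x + y) z = mink x z + mink y z := by
  simp [mink]; ring
lemma mink_add_right (x y z : Fin 3 → ℝ) : mink x (y + z) = mink x y + mink x z := by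
  simp [mink]; ring
lemma mink_smul_left (r : ℝ) (x y : Fin 3 → ℝ) : mink (r • x) y = r * mink x y := by
  simp [mink]; ring
lemma mink_smul_right (r : ℝ) (x y : Fin 3 → ℝ) : mink x (r • y) = r * mink x y := by
  simp [mink]; ring
lemma mink_comm (x y : Fin 3 → ℝ) : mink x y = mink y x := by simp [mink]; ring

lemma lcross_add_left (x y z : Fin 3 → ℝ) : lcross (x + y) z = lcross x z + lcross y z := by
  funext i; fin_cases i <;> simp [lcross] <;> ring
lemma lcross_add_right (x y z : Fin 3 → ℝ) : lcross x (y + z) = lcross x y + lcross x z := by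
  funext i; fin_cases i <;> simp [lcross] <;> ring
lemma lcross_smul_left (r : ℝ) (x y : Fin 3 → ℝ) : lcross (r • x) y = r • lcross x y := by
  funext i; fin_cases i <;> simp [lcross] <;> ring
lemma lcross_smul_right (r : ℝ) (x y : Fin 3 → ℝ) : lcross x (r • y) = r • lcross x y := by
  funext i; fin_cases i <;> simp [lcross] <;> ring
lemma lcross_self (x : Fin 3 → ℝ) : lcross x x = 0 := by
  funext i; fin_cases i <;> simp [lcross] <;> ring
lemma lcross_anticomm (x y : Fin 3 → ℝ) : lcross y x = -lcross x y := by
  funext i; fin_cases i <;> simp [lcross] <;> ring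

lemma lcross_triple (a b c : Fin 3 → ℝ) :
    lcross a (lcross b c) = mink a b • c - mink a c • b := by
  funext i; fin_cases i <;> simp [lcross, mink] <;> ring

lemma mink_lcross_self_left (x y : Fin 3 → ℝ) : mink x (lcross x y) = 0 := by
  simp [lcross, mink]; ring
lemma mink_lcross_self_right (x y : Fin 3 → ℝ) : mink y (lcross x y) = 0 := by
  simp [lcross, mink]; ring
lemma mink_lcross_sq (x y : Fin 3 → ℝ) :
    mink (lcross x y) (lcross x y) = (mink x y)^2 - mink x x * mink y y := by
  simp [lcross, mink]; ring

lemma hasDerivAt_lcross {f g : ℝ → Fin 3 → ℝ} {f' g' : Fin 3 → ℝ} {t : ℝ}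
    (hf : HasDerivAt f f' t) (hg : HasDerivAt g g' t) :
    HasDerivAt (fun τ => lcross (f τ) (g τ)) (lcross f' (g t) + lcross (f t) g') t := by
  rw [hasDerivAt_pi] at hf hg ⊢
  intro i
  fin_cases i <;>
    [ (convert ((((hf 1).mul (hg 2)).sub ((hf 2).mul (hg 1))).neg) using 1);
      (convert ((((hf 0).mul (hg 2)).sub ((hf 2).mul (hg 0))).neg) using 1);
      (convert (((hf 0).mul (hg 1)).sub ((hf 1).mul (hg 0))) using 1) ] <;>
  · simp [lcross, funext_iff] <;> ring


/-- The family of tangent horocycles `x_T^±` of a spacelike Legendre curve, together with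
`ν_T^±`, is a one-parameter family of spacelike Legendre curves with curvature
`(∓1, ∓1, s(m±n), ∓m ± s²(m±n)/2, n ± s²(m±n)/2)`.  The sign `±` is encoded by
`ε ∈ {1, -1}`. -/
theorem stmt_13 (I : Set ℝ) (hI : I.OrdConnected)
    (γ ν : ℝ → Fin 3 → ℝ) (m n : ℝ → ℝ)
    (hγ : ContDiff ℝ (⊤ : ℕ∞) γ) (hν : ContDiff ℝ (⊤ : ℕ∞) ν)
    (hm : ContDiff ℝ (⊤ : ℕ∞) m) (hn : ContDiff ℝ (⊤ : ℕ∞) n)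
    (hH : ∀ t ∈ I, mink (γ t) (γ t) = -1 ∧ 0 < γ t 0)
    (hS : ∀ t ∈ I, mink (ν t) (ν t) = 1)
    (hO : ∀ t ∈ I, mink (γ t) (ν t) = 0)
    (hdγ : ∀ t ∈ I, deriv γ t = m t • lcross (γ t) (ν t))
    (hdν : ∀ t ∈ I, deriv ν t = n t • lcross (γ t) (ν t))
    (ε : ℝ) (hε : ε = 1 ∨ ε = -1)
    (xT νT : ℝ → ℝ → Fin 3 → ℝ)
    (hxT : ∀ s t, xT s t
      = γ t + s • lcross (γ t) (ν t) + (s ^ 2 / 2) • (γ t + ε • ν t))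
    (hνT : ∀ s t, νT s t
      = (-ε) • ν t + s • lcross (γ t) (ν t) + (s ^ 2 / 2) • (γ t + ε • ν t))
    (μT : ℝ → ℝ → Fin 3 → ℝ)
    (hμT : ∀ s t, μT s t = lcross (xT s t) (νT s t)) :
    ∀ s : ℝ, ∀ t ∈ I,
      (mink (xT s t) (xT s t) = -1 ∧ 0 < xT s t 0) ∧
      mink (νT s t) (νT s t) = 1 ∧
      mink (xT s t) (νT s t) = 0 ∧
      mink (deriv (fun u => xT u t) s) (νT s t) = 0 ∧
      deriv (fun u => xT u t) s = (-ε) • μT s t ∧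
      deriv (fun u => νT u t) s = (-ε) • μT s t ∧
      deriv (fun τ => xT s τ) t
        = (s * (m t + ε * n t)) • νT s t
          + (-ε * m t + ε * (s ^ 2 * (m t + ε * n t) / 2)) • μT s t ∧
      deriv (fun τ => νT s τ) t
        = (s * (m t + ε * n t)) • xT s t
          + (n t + ε * (s ^ 2 * (m t + ε * n t) / 2)) • μT s t := by
  intro s t ht
  obtain ⟨hg, hg0⟩ := hH t ht
  have hv := hS t ht
  have ho := hO t ht
  set g : Fin 3 → ℝ := γ t with hgdef
  set v : Fin 3 → ℝ := ν t with hvdef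
  set μ : Fin 3 → ℝ := lcross g v with hμdef
  -- scalar product table
  have mgg : mink g g = -1 := hg
  have mvv : mink v v = 1 := hv
  have mgv : mink g v = 0 := ho
  have mvg : mink v g = 0 := by rw [mink_comm]; exact ho
  have mgm : mink g μ = 0 := mink_lcross_self_left g v
  have mvm : mink v μ = 0 := mink_lcross_self_right g v
  have mmg : mink μ g = 0 := by rw [mink_comm]; exact mgm
  have mmv : mink μ v = 0 := by rw [mink_comm]; exact mvm
  have mmm : mink μ μ = 1 := by
    rw [hμdef, mink_lcross_sq, mgv, mgg, mvv]; norm_num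
  -- cross product table
  have cgv : lcross g v = μ := hμdef.symm
  have cvg : lcross v g = -μ := by rw [lcross_anticomm, cgv]
  have cgm : lcross g μ = -v := by
    rw [hμdef, lcross_triple, mgg, mgv]; module
  have cvm : lcross v μ = -g := by
    rw [hμdef, lcross_triple, mvg, mvv]; module
  have cmg : lcross μ g = v := by rw [lcross_anticomm, cgm]; module
  have cmv : lcross μ v = g := by rw [lcross_anticomm, cvm]; module
  have cgg : lcross g g = 0 := lcross_self g
  have cvv : lcross v v = 0 := lcross_self v
  have cmm : lcross μ μ = 0 := lcross_self μ
  -- decompositions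
  have hx : ∀ u : ℝ, xT u t = (1 + u^2/2) • g + (ε * (u^2/2)) • v + u • μ := by
    intro u; rw [hxT, ← hgdef, ← hvdef, ← hμdef]; module
  have hn2 : ∀ u : ℝ, νT u t = (u^2/2) • g + (ε * (u^2/2) - ε) • v + u • μ := by
    intro u; rw [hνT, ← hgdef, ← hvdef, ← hμdef]; module
  have hmu : ∀ u : ℝ, μT u t = (-(ε*u)) • g + (-u) • v + (-ε) • μ := by
    intro u
    rw [hμT, hx u, hn2 u]
    simp only [lcross_add_left, lcross_add_right, lcross_smul_left, lcross_smul_right,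
      cgv, cvg, cgm, cvm, cmg, cmv, cgg, cvv, cmm, smul_zero, smul_neg, add_zero, zero_add]
    match_scalars <;> rcases hε with rfl | rfl <;> ring
  -- scalar product identities
  have hMx : ∀ u : ℝ, mink (xT u t) (xT u t) = -1 := by
    intro u
    rw [hx u]
    simp only [mink_add_left, mink_add_right, mink_smul_left, mink_smul_right,
      mgg, mvv, mgv, mvg, mgm, mvm, mmg, mmv, mmm]
    rcases hε with rfl | rfl <;> ring
  have hMn : mink (νT s t) (νT s t) = 1 := by
    rw [hn2 s]
    simp only [mink_add_left, mink_add_right, mink_smul_left, mink_smul_right,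
      mgg, mvv, mgv, mvg, mgm, mvm, mmg, mmv, mmm]
    rcases hε with rfl | rfl <;> ring
  have hMxn : mink (xT s t) (νT s t) = 0 := by
    rw [hx s, hn2 s]
    simp only [mink_add_left, mink_add_right, mink_smul_left, mink_smul_right,
      mgg, mvv, mgv, mvg, mgm, mvm, mmg, mmv, mmm]
    rcases hε with rfl | rfl <;> ring
  -- positivity of the first coordinate
  have hpos : 0 < xT s t 0 := by
    by_contra hcon
    push_neg at hcon
    have hcont : Continuous fun u : ℝ => xT u t 0 := by
      have heq : (fun u : ℝ => xT u t 0)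
          = fun u => (1 + u^2/2) * g 0 + (ε * (u^2/2)) * v 0 + u * μ 0 := by
        funext u; rw [hx u]; simp [Pi.add_apply, Pi.smul_apply, smul_eq_mul]
      rw [heq]; fun_prop
    have h0 : xT 0 t 0 = g 0 := by
      rw [hx 0]; norm_num
    have hmem : (0:ℝ) ∈ Set.uIcc (xT 0 t 0) (xT s t 0) := by
      rw [Set.mem_uIcc]
      exact Or.inr ⟨hcon, by rw [h0]; exact le_of_lt hg0⟩
    obtain ⟨u, -, hu⟩ := intermediate_value_uIcc hcont.continuousOn hmem
    have hval := hMx u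
    simp only [mink, hu] at hval
    nlinarith [sq_nonneg (xT u t 1), sq_nonneg (xT u t 2)]
  -- s-derivatives
  have h2 : HasDerivAt (fun u : ℝ => u^2/2) s s := by
    have h := (hasDerivAt_pow 2 s).div_const 2
    exact h.congr_deriv (by norm_num)
  have hds : HasDerivAt (fun u => xT u t) ((1:ℝ) • μ + s • (g + ε • v)) s := by
    have heq : (fun u => xT u t) = fun u => g + (u • μ + (u^2/2) • (g + ε • v)) := by
      funext u; rw [hx u]; module
    rw [heq]
    exact (((hasDerivAt_id s).smul_const μ).add (h2.smul_const (g + ε • v))).const_add g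
  have hds' : HasDerivAt (fun u => νT u t) ((1:ℝ) • μ + s • (g + ε • v)) s := by
    have heq : (fun u => νT u t) = fun u => (-ε) • v + (u • μ + (u^2/2) • (g + ε • v)) := by
      funext u; rw [hn2 u]; module
    rw [heq]
    exact (((hasDerivAt_id s).smul_const μ).add (h2.smul_const (g + ε • v))).const_add ((-ε) • v)
  have e5 : deriv (fun u => xT u t) s = (-ε) • μT s t := by
    rw [hds.deriv, hmu s]
    match_scalars <;> rcases hε with rfl | rfl <;> ring
  have e6 : deriv (fun u => νT u t) s = (-ε) • μT s t := by
    rw [hds'.deriv, hmu s]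
    match_scalars <;> rcases hε with rfl | rfl <;> ring
  have e4 : mink (deriv (fun u => xT u t) s) (νT s t) = 0 := by
    rw [e5, hmu s, hn2 s]
    simp only [mink_add_left, mink_add_right, mink_smul_left, mink_smul_right,
      mgg, mvv, mgv, mvg, mgm, mvm, mmg, mmv, mmm]
    rcases hε with rfl | rfl <;> ring
  -- t-derivatives
  have hγd : HasDerivAt γ (m t • μ) t := by
    have h := (hγ.differentiable (by simp) t).hasDerivAt
    rwa [hdγ t ht, ← hgdef, ← hvdef, ← hμdef] at h
  have hνd : HasDerivAt ν (n t • μ) t := by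
    have h := (hν.differentiable (by simp) t).hasDerivAt
    rwa [hdν t ht, ← hgdef, ← hvdef, ← hμdef] at h
  have hLd : HasDerivAt (fun τ => lcross (γ τ) (ν τ))
      (lcross (m t • μ) v + lcross g (n t • μ)) t := hasDerivAt_lcross hγd hνd
  have e7 : deriv (fun τ => xT s τ) t
      = (s * (m t + ε * n t)) • νT s t
        + (-ε * m t + ε * (s ^ 2 * (m t + ε * n t) / 2)) • μT s t := by
    have heq : (fun τ => xT s τ)
        = fun τ => γ τ + s • lcross (γ τ) (ν τ) + (s ^ 2 / 2) • (γ τ + ε • ν τ) := by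
      funext τ; exact hxT s τ
    have hD : HasDerivAt (fun τ => xT s τ)
        ((m t • μ) + s • (lcross (m t • μ) v + lcross g (n t • μ))
          + (s ^ 2 / 2) • (m t • μ + ε • (n t • μ))) t := by
      rw [heq]
      exact (hγd.add (hLd.const_smul s)).add ((hγd.add (hνd.const_smul ε)).const_smul (s ^ 2 / 2))
    rw [hD.deriv, hn2 s, hmu s]
    simp only [lcross_smul_left, lcross_smul_right, cmv, cgm]
    match_scalars <;> rcases hε with rfl | rfl <;> ring
  have e8 : deriv (fun τ => νT s τ) t
      = (s * (m t + ε * n t)) • xT s t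
        + (n t + ε * (s ^ 2 * (m t + ε * n t) / 2)) • μT s t := by
    have heq : (fun τ => νT s τ)
        = fun τ => (-ε) • ν τ + s • lcross (γ τ) (ν τ) + (s ^ 2 / 2) • (γ τ + ε • ν τ) := by
      funext τ; exact hνT s τ
    have hD : HasDerivAt (fun τ => νT s τ)
        ((-ε) • (n t • μ) + s • (lcross (m t • μ) v + lcross g (n t • μ))
          + (s ^ 2 / 2) • (m t • μ + ε • (n t • μ))) t := by
      rw [heq]
      exact ((hνd.const_smul (-ε)).add (hLd.const_smul s)).add
        ((hγd.add (hνd.const_smul ε)).const_smul (s ^ 2 / 2))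
    rw [hD.deriv, hx s, hmu s]
    simp only [lcross_smul_left, lcross_smul_right, cmv, cgm]
    match_scalars <;> rcases hε with rfl | rfl <;> ring
  exact ⟨⟨hMx s, hpos⟩, hMn, hMxn, e4, e5, e6, e7, e8⟩
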